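/- arXiv:2211.16998 — 2 statements merged into one kernel-verified Lean document; each statement's English description precedes it below -/
import Mathlib

section
/- The operators A_𝐢 = Σ_{p∈P_𝐢} p, indexed by 4-tuples 𝐢 = (i₁,i_x,i_y,i_z) summing to n, are linearly independent and span the commutant of the permutation representation R(S_n) inside the algebra of operators on (ℂ²)^⊗n; hence the algebra of S_n-invariant operators on n qubits has dimension C(n+3,3). -/
open Matrix

noncomputable section

/-- The Pauli matrices `σ₁ = I, σx, σy, σz`, indexed by `0,1,2,3`. -/
def pauli : Fin 4 → Matrix (Fin 2) (Fin 2) ℂ :=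
  ![1, !![0, 1; 1, 0], !![0, -Complex.I; Complex.I, 0], !![1, 0; 0, -1]]

/-- The matrix, in the computational basis of `(ℂ²)^⊗n`, of the representation
of `Sₙ` permuting tensor factors. -/
def Rmat (n : ℕ) (π : Equiv.Perm (Fin n)) :
    Matrix (Fin n → Fin 2) (Fin n → Fin 2) ℂ :=
  Matrix.of fun s t => if t = s ∘ π then 1 else 0

/-- The Pauli word `σ_{p 1} ⊗ ⋯ ⊗ σ_{p n}` as a matrix on `(ℂ²)^⊗n`. -/
def pauliWord (n : ℕ) (p : Fin n → Fin 4) :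
    Matrix (Fin n → Fin 2) (Fin n → Fin 2) ℂ :=
  Matrix.of fun s t => ∏ i, pauli (p i) (s i) (t i)

/-- The symmetrized Pauli operator `A_𝐢 = ∑_{p ∈ P_𝐢} p`, the sum of all Pauli
words of type `𝐢 = (i₁, iₓ, i_y, i_z)`. -/
def Asym (n : ℕ) (iv : Fin 4 → ℕ) :
    Matrix (Fin n → Fin 2) (Fin n → Fin 2) ℂ :=
  ∑ p ∈ Finset.univ.filter
      (fun p : Fin n → Fin 4 =>
        ∀ a, (Finset.univ.filter fun i => p i = a).card = iv a),
    pauliWord n p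

/-!
The Pauli words form a basis of the operators on `(ℂ²)^⊗n`, orthogonal for the trace form
`(A, B) ↦ tr (A B)`, and conjugation by `R(π)` permutes them: it sends the word `p` to
`p ∘ π⁻¹`. Hence an operator commutes with `R(Sₙ)` iff its Pauli coefficients are constant on
`Sₙ`-orbits of words, and these orbits are exactly the sets `P_𝐢` of words of a given type `𝐢`.
So the `A_𝐢` are the sums of a basis over the blocks of a partition: they are independent and
span the commutant, and there are as many as multisets of size `n` on four letters.
-/

open Finset

section PiKron

variable {ι α R : Type*} [Fintype ι] [CommSemiring R]

def piKron (A : ι → Matrix α α R) : Matrix (ι → α) (ι → α) R :=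
  of fun s t => ∏ i, A i (s i) (t i)

lemma piKron_mul_piKron [DecidableEq ι] [Fintype α] (A B : ι → Matrix α α R) :
    piKron A * piKron B = piKron (A * B) := by
  ext s t
  simp only [piKron, mul_apply, of_apply, Pi.mul_apply, Fintype.prod_sum, prod_mul_distrib]

lemma trace_piKron [DecidableEq ι] [Fintype α] (A : ι → Matrix α α R) :
    (piKron A).trace = ∏ i, (A i).trace := by
  simp only [trace, Matrix.diag, piKron, of_apply, Fintype.prod_sum]

lemma submatrix_piKron (A : ι → Matrix α α R) (π : Equiv.Perm ι) :
    (piKron A).submatrix (· ∘ π) (· ∘ π) = piKron (A ∘ ⇑π⁻¹) := by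
  ext s t
  exact Fintype.prod_equiv π _ _ fun i => by simp

end PiKron

-- No adjoint, unlike the Hilbert–Schmidt product; the two agree on Hermitian matrices such as
-- the Pauli words.
def traceMulForm (m R : Type*) [Fintype m] [DecidableEq m] [CommSemiring R] :
    LinearMap.BilinForm R (Matrix m m R) :=
  (LinearMap.mul R _).compr₂ (traceLinearMap m R R)

def Equiv.Perm.precomp {ι : Type*} (α : Type*) (π : Equiv.Perm ι) : (ι → α) ≃ (ι → α) :=
  Equiv.arrowCongr π.symm (Equiv.refl α)

@[simp]
lemma Equiv.Perm.precomp_apply {ι α : Type*} (π : Equiv.Perm ι) (s : ι → α) :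
    π.precomp α s = s ∘ π :=
  rfl

lemma Module.Basis.repr_apply_of_permutes {ι R M : Type*} [CommSemiring R] [AddCommMonoid M]
    [Module R M] (b : Module.Basis ι R M) (φ : M →ₗ[R] M) (σ : ι ≃ ι)
    (h : ∀ i, φ (b i) = b (σ i)) (x : M) (i : ι) : b.repr (φ x) (σ i) = b.repr x i := by
  classical
  have := b.ext (f₁ := b.coord (σ i) ∘ₗ φ) (f₂ := b.coord i) fun j => by
    simp [h, Finsupp.single_apply, σ.injective.eq_iff]
  exact LinearMap.congr_fun this x

section WordType

variable {ι α : Type*} [Fintype ι] [DecidableEq α]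

def wordType (p : ι → α) (a : α) : ℕ := #{i | p i = a}

lemma wordType_eq_count (p : ι → α) (a : α) : wordType p a = (univ.val.map p).count a := by
  simp [wordType, Multiset.count_map, Finset.card, eq_comm]

lemma wordType_comp_perm (p : ι → α) (π : Equiv.Perm ι) : wordType (p ∘ π) = wordType p := by
  funext a
  simp only [wordType_eq_count, ← Multiset.map_map, Multiset.map_univ_val_equiv]

lemma sum_wordType [Fintype α] (p : ι → α) : ∑ a, wordType p a = Fintype.card ι :=
  (card_eq_sum_card_fiberwise fun i _ => mem_univ (p i)).symm

lemma exists_perm_of_wordType_eq {p q : ι → α} (h : wordType p = wordType q) :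
    ∃ π : Equiv.Perm ι, p = q ∘ π := by
  have fiber (a : α) : {i // p i = a} ≃ {i // q i = a} :=
    Fintype.equivOfCardEq (by rw [Fintype.card_subtype, Fintype.card_subtype]; exact congrFun h a)
  refine ⟨(Equiv.sigmaFiberEquiv p).symm.trans
      ((Equiv.sigmaCongrRight fiber).trans (Equiv.sigmaFiberEquiv q)), funext fun i => ?_⟩
  exact (fiber (p i) ⟨i, rfl⟩).2.symm

omit [DecidableEq α] in
lemma Multiset.exists_map_univ_eq {n : ℕ} (m : Multiset α) (hm : Multiset.card m = n) :
    ∃ p : Fin n → α, univ.val.map p = m := by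
  rcases m with ⟨l⟩
  change (l : Multiset α).card = n at hm
  rw [Multiset.coe_card] at hm
  subst hm
  exact ⟨l.get, by rw [Fin.univ_val_map, List.ofFn_get]; rfl⟩

lemma exists_wordType_eq [Fintype α] {n : ℕ} (iv : α → ℕ) (h : ∑ a, iv a = n) :
    ∃ p : Fin n → α, wordType p = iv := by
  set s := (Sym.equivNatSumOfFintype α n).symm ⟨iv, h⟩
  have hs (a : α) : (s : Multiset α).count a = iv a := by
    rw [← Sym.coe_equivNatSumOfFintype_apply_apply, Equiv.apply_symm_apply]
  obtain ⟨p, hp⟩ := Multiset.exists_map_univ_eq (s : Multiset α) s.2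
  exact ⟨p, funext fun a => by rw [wordType_eq_count, hp, hs]⟩

end WordType

section FiberSums

variable {ι κ R M : Type*} [Fintype ι] [Fintype κ] [DecidableEq κ]

lemma sum_smul_eq_sum_smul_fiber_sum [Semiring R] [AddCommMonoid M] [Module R M] (v : ι → M)
    {f : ι → κ} (hf : f.Surjective) (c : ι → R) (hc : ∀ i j, f i = f j → c i = c j) :
    ∑ i, c i • v i = ∑ k, c (f.surjInv hf k) • ∑ i with f i = k, v i := by
  rw [← sum_fiberwise univ f]
  refine sum_congr rfl fun k _ => ?_
  rw [smul_sum]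
  refine sum_congr rfl fun i hi => ?_
  rw [hc i (f.surjInv hf k) (by rw [(mem_filter.1 hi).2, Function.surjInv_eq hf])]

lemma LinearIndependent.fiber_sum [Ring R] [AddCommGroup M] [Module R M] {v : ι → M}
    (hv : LinearIndependent R v) {f : ι → κ} (hf : f.Surjective) :
    LinearIndependent R (fun k => ∑ i with f i = k, v i) := by
  rw [Fintype.linearIndependent_iff]
  intro g hg k
  have hsum : ∑ i, g (f i) • v i = 0 := by
    rw [← hg, ← sum_fiberwise univ f]
    refine sum_congr rfl fun k _ => ?_
    rw [smul_sum]
    exact sum_congr rfl fun i hi => by rw [(mem_filter.1 hi).2]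
  obtain ⟨i, rfl⟩ := hf k
  exact Fintype.linearIndependent_iff.1 hv _ hsum i

end FiberSums

instance {α : Type*} [Fintype α] [DecidableEq α] (n : ℕ) :
    Fintype {iv : α → ℕ // ∑ a, iv a = n} :=
  Fintype.ofEquiv _ (Sym.equivNatSumOfFintype α n)

lemma trace_pauli_mul_pauli (a b : Fin 4) :
    (pauli a * pauli b).trace = if a = b then 2 else 0 := by
  fin_cases a <;> fin_cases b <;> simp [pauli, trace_fin_two, one_add_one_eq_two]

lemma pauliWord_eq_piKron (n : ℕ) (p : Fin n → Fin 4) : pauliWord n p = piKron (pauli ∘ p) :=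
  rfl

lemma trace_pauliWord_mul_pauliWord (n : ℕ) (p q : Fin n → Fin 4) :
    (pauliWord n p * pauliWord n q).trace = if p = q then 2 ^ n else 0 := by
  rw [pauliWord_eq_piKron, pauliWord_eq_piKron, piKron_mul_piKron, trace_piKron]
  simp only [Pi.mul_apply, Function.comp_apply, trace_pauli_mul_pauli]
  split_ifs with h
  · simp [h]
  · obtain ⟨i, hi⟩ := Function.ne_iff.mp h
    exact prod_eq_zero (mem_univ i) (if_neg hi)

lemma linearIndependent_pauliWord (n : ℕ) : LinearIndependent ℂ (pauliWord n) := by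
  refine LinearMap.linearIndependent_of_isOrthoᵢ (B := traceMulForm _ ℂ) ?_ fun p => ?_
  · refine LinearMap.isOrthoᵢ_def.2 fun p q hpq => ?_
    simp [traceMulForm, trace_pauliWord_mul_pauliWord, hpq]
  · simp [traceMulForm, trace_pauliWord_mul_pauliWord]

lemma card_pauliWords_eq_finrank (n : ℕ) : Fintype.card (Fin n → Fin 4) =
    Module.finrank ℂ (Matrix (Fin n → Fin 2) (Fin n → Fin 2) ℂ) := by
  simp [Module.finrank_matrix, ← mul_pow]

def pauliBasis (n : ℕ) :
    Module.Basis (Fin n → Fin 4) ℂ (Matrix (Fin n → Fin 2) (Fin n → Fin 2) ℂ) :=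
  basisOfLinearIndependentOfCardEqFinrank (linearIndependent_pauliWord n)
    (card_pauliWords_eq_finrank n)

@[simp]
lemma coe_pauliBasis (n : ℕ) : ⇑(pauliBasis n) = pauliWord n :=
  coe_basisOfLinearIndependentOfCardEqFinrank _ _

lemma Rmat_eq_toMatrix (n : ℕ) (π : Equiv.Perm (Fin n)) :
    Rmat n π = (π.precomp (Fin 2)).toPEquiv.toMatrix := by
  ext s t
  simp [Rmat, eq_comm (b := t)]

lemma Rmat_mul_mul_Rmat_inv (n : ℕ) (π : Equiv.Perm (Fin n))
    (H : Matrix (Fin n → Fin 2) (Fin n → Fin 2) ℂ) :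
    Rmat n π * H * Rmat n π⁻¹ = H.submatrix (· ∘ π) (· ∘ π) := by
  rw [Rmat_eq_toMatrix, Rmat_eq_toMatrix, PEquiv.toMatrix_toPEquiv_mul,
    PEquiv.mul_toMatrix_toPEquiv, submatrix_submatrix]
  rfl

lemma Rmat_mul_pauliWord_mul_Rmat_inv (n : ℕ) (π : Equiv.Perm (Fin n)) (p : Fin n → Fin 4) :
    Rmat n π * pauliWord n p * Rmat n π⁻¹ = pauliWord n (p ∘ ⇑π⁻¹) := by
  rw [Rmat_mul_mul_Rmat_inv, pauliWord_eq_piKron, submatrix_piKron]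
  rfl

def permCommutant (n : ℕ) : Submodule ℂ (Matrix (Fin n → Fin 2) (Fin n → Fin 2) ℂ) where
  carrier := {H | ∀ π, Rmat n π * H * Rmat n π⁻¹ = H}
  add_mem' hA hB π := by rw [mul_add, add_mul, hA π, hB π]
  zero_mem' π := by rw [mul_zero, zero_mul]
  smul_mem' c H hH π := by rw [Matrix.mul_smul, Matrix.smul_mul, hH π]

lemma pauliBasis_repr_comp_perm {n : ℕ} {H : Matrix (Fin n → Fin 2) (Fin n → Fin 2) ℂ}
    (hH : H ∈ permCommutant n) (π : Equiv.Perm (Fin n)) (p : Fin n → Fin 4) :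
    (pauliBasis n).repr H (p ∘ π) = (pauliBasis n).repr H p := by
  let conj := LinearMap.mulRight ℂ (Rmat n π⁻¹⁻¹) ∘ₗ LinearMap.mulLeft ℂ (Rmat n π⁻¹)
  have hconj (q : Fin n → Fin 4) : conj (pauliBasis n q) = pauliBasis n (π.precomp _ q) := by
    simp only [conj, LinearMap.comp_apply, LinearMap.mulLeft_apply, LinearMap.mulRight_apply,
      coe_pauliBasis]
    rw [Rmat_mul_pauliWord_mul_Rmat_inv, inv_inv, Equiv.Perm.precomp_apply]
  have := (pauliBasis n).repr_apply_of_permutes conj (π.precomp _) hconj H p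
  rwa [show conj H = H from hH π⁻¹] at this

def pauliType (n : ℕ) (p : Fin n → Fin 4) : {iv : Fin 4 → ℕ // ∑ a, iv a = n} :=
  ⟨wordType p, by rw [sum_wordType, Fintype.card_fin]⟩

lemma pauliType_comp_perm (n : ℕ) (p : Fin n → Fin 4) (π : Equiv.Perm (Fin n)) :
    pauliType n (p ∘ π) = pauliType n p :=
  Subtype.ext (wordType_comp_perm p π)

lemma pauliType_surjective (n : ℕ) : (pauliType n).Surjective := fun iv => by
  obtain ⟨p, hp⟩ := exists_wordType_eq iv.1 iv.2
  exact ⟨p, Subtype.ext hp⟩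

lemma Asym_eq_sum_pauliType_eq (n : ℕ) (iv : {iv : Fin 4 → ℕ // ∑ a, iv a = n}) :
    Asym n iv = ∑ p with pauliType n p = iv, pauliWord n p := by
  simp only [Asym, pauliType, Subtype.ext_iff, funext_iff, wordType]

lemma Asym_mem_permCommutant (n : ℕ) (iv : {iv : Fin 4 → ℕ // ∑ a, iv a = n}) :
    Asym n iv ∈ permCommutant n := by
  intro π
  simp only [Asym_eq_sum_pauliType_eq, mul_sum, sum_mul, Rmat_mul_pauliWord_mul_Rmat_inv]
  exact sum_equiv (π⁻¹.precomp _) (fun p => by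
    simp only [mem_filter, mem_univ, true_and, Equiv.Perm.precomp_apply, pauliType_comp_perm])
    fun p _ => rfl

lemma span_Asym_eq_permCommutant (n : ℕ) :
    Submodule.span ℂ (Set.range fun iv : {iv : Fin 4 → ℕ // ∑ a, iv a = n} => Asym n iv.1) =
      permCommutant n := by
  refine le_antisymm (Submodule.span_le.2 (Set.range_subset_iff.2 fun iv =>
    Asym_mem_permCommutant n iv)) fun H hH => ?_
  have hc (p q : Fin n → Fin 4) (hpq : pauliType n p = pauliType n q) :
      (pauliBasis n).repr H p = (pauliBasis n).repr H q := by
    obtain ⟨π, rfl⟩ := exists_perm_of_wordType_eq (p := p) (q := q) (congrArg Subtype.val hpq)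
    exact pauliBasis_repr_comp_perm hH π q
  rw [← (pauliBasis n).sum_repr H, coe_pauliBasis,
    sum_smul_eq_sum_smul_fiber_sum _ (pauliType_surjective n) _ hc]
  exact Submodule.sum_mem _ fun iv _ => Submodule.smul_mem _ _
    (Submodule.subset_span ⟨iv, Asym_eq_sum_pauliType_eq n iv⟩)

/-- The symmetrized Pauli operators `A_𝐢`, indexed by 4-tuples summing to `n`,
are linearly independent and span the commutant of the permutation
representation of `Sₙ` on `(ℂ²)^⊗n`; hence the algebra of `Sₙ`-invariant
operators on `n` qubits has dimension `C(n+3,3)`. -/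
theorem symmetrized_pauli_basis_of_commutant (n : ℕ) :
    LinearIndependent ℂ
        (fun iv : {iv : Fin 4 → ℕ // ∑ a, iv a = n} => Asym n iv.1) ∧
      (∀ H : Matrix (Fin n → Fin 2) (Fin n → Fin 2) ℂ,
        H ∈ Submodule.span ℂ
            (Set.range fun iv : {iv : Fin 4 → ℕ // ∑ a, iv a = n} => Asym n iv.1) ↔
          ∀ π : Equiv.Perm (Fin n), Rmat n π * H * Rmat n π⁻¹ = H) ∧
      Module.finrank ℂ
          ↥(Submodule.span ℂ
            (Set.range fun iv : {iv : Fin 4 → ℕ // ∑ a, iv a = n} => Asym n iv.1)) =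
        (n + 3).choose 3 := by
  have hli : LinearIndependent ℂ
      (fun iv : {iv : Fin 4 → ℕ // ∑ a, iv a = n} => Asym n iv.1) := by
    simpa only [Asym_eq_sum_pauliType_eq] using
      (linearIndependent_pauliWord n).fiber_sum (pauliType_surjective n)
  refine ⟨hli, fun H => by rw [span_Asym_eq_permCommutant]; rfl, ?_⟩
  rw [finrank_span_eq_card hli, Fintype.card_congr (Sym.equivNatSumOfFintype (Fin 4) n).symm,
    Sym.card_sym_eq_choose, Fintype.card_fin, show 4 + n - 1 = n + 3 by omega]
  exact Nat.choose_symm_of_eq_add rfl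
end
end

section
/- Let |Ψ⟩ be the two-qubit singlet and for 0 ≤ q ≤ m let |Σ_m^q⟩ be the sum of all computational basis states on m qubits with exactly q ones. For a two-row Young diagram λ = (λ₀, λ₁) with λ₀ + λ₁ = n, the Young symmetrizer Π_{p_{λ0}} for the column-standard tableau applied to the state |x_q⟩ = |01⟩^⊗λ₁ ⊗ |0⟩^⊗(n-2λ₁-q) ⊗ |1⟩^⊗q yields (up to normalization) the state |Ψ⟩^⊗λ₁ ⊗ |Σ_{n-2λ₁}^q⟩/√C(n-2λ₁, q). -/
open Matrix

noncomputable section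

/-- The computational basis vector `|b⟩` of `(ℂ²)^⊗n`. -/
def basisVec (n : ℕ) (b : Fin n → Fin 2) : (Fin n → Fin 2) → ℂ :=
  fun s => if s = b then 1 else 0

/-- The bitstring of the state `|x_q⟩ = |01⟩^⊗λ₁ ⊗ |0⟩^⊗(n-2λ₁-q) ⊗ |1⟩^⊗q`. -/
def xqBits (n lam1 q : ℕ) : Fin n → Fin 2 := fun i =>
  if (i : ℕ) < 2 * lam1 then (if (i : ℕ) % 2 = 1 then 1 else 0)
  else if (i : ℕ) < n - q then 0 else 1

/-- The amplitudes of the two-qubit singlet `(|01⟩ - |10⟩)/√2`. -/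
def sing : Fin 2 → Fin 2 → ℂ := fun a b =>
  if a = 0 ∧ b = 1 then (Real.sqrt 2 : ℂ)⁻¹
  else if a = 1 ∧ b = 0 then -(Real.sqrt 2 : ℂ)⁻¹ else 0

/-- The state `|Ψ⟩^⊗λ₁ ⊗ |Σ_{n-2λ₁}^q⟩ / √C(n-2λ₁, q)`: `λ₁` singlets on the
first `λ₁` qubit pairs, and the (normalized) sum of all bitstrings with `q`
ones on the remaining `n - 2λ₁` qubits. -/
def targetState (n lam1 q : ℕ) (h2 : 2 * lam1 ≤ n) : (Fin n → Fin 2) → ℂ :=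
  fun s =>
    ((Real.sqrt ((n - 2 * lam1).choose q) : ℝ) : ℂ)⁻¹ *
      (∏ j : Fin lam1,
        sing (s ⟨2 * (j : ℕ), by have := j.2; omega⟩)
          (s ⟨2 * (j : ℕ) + 1, by have := j.2; omega⟩)) *
      (if (Finset.univ.filter fun i : Fin n =>
          2 * lam1 ≤ (i : ℕ) ∧ s i = 1).card = q then 1 else 0)

/-- The row of the cell occupied by qubit `i` in the column-standard tableau of
shape `(n - λ₁, λ₁)` (columns are the pairs `{2j, 2j+1}` for `j < λ₁`). -/
def rowLabel (n lam1 : ℕ) (i : Fin n) : ℕ :=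
  if (i : ℕ) < 2 * lam1 then (i : ℕ) % 2 else 0

/-- The column of the cell occupied by qubit `i` in the column-standard tableau
of shape `(n - λ₁, λ₁)`. -/
def colLabel (n lam1 : ℕ) (i : Fin n) : ℕ :=
  if (i : ℕ) < 2 * lam1 then (i : ℕ) / 2 else (i : ℕ)

/-- The row symmetrizer `∑_{r ∈ Row(p_λ)} R(r)`. -/
def rowSym (n lam1 : ℕ) : Matrix (Fin n → Fin 2) (Fin n → Fin 2) ℂ :=
  ∑ π ∈ Finset.univ.filter
      (fun π : Equiv.Perm (Fin n) => ∀ i, rowLabel n lam1 (π i) = rowLabel n lam1 i),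
    Rmat n π

/-- The column antisymmetrizer `∑_{c ∈ Col(p_λ)} sgn(c) R(c)`. -/
def colSym (n lam1 : ℕ) : Matrix (Fin n → Fin 2) (Fin n → Fin 2) ℂ :=
  ∑ π ∈ Finset.univ.filter
      (fun π : Equiv.Perm (Fin n) => ∀ i, colLabel n lam1 (π i) = colLabel n lam1 i),
    ((Equiv.Perm.sign π : ℤ) : ℂ) • Rmat n π

/-! The amplitude of the symmetrized state at `s` is `∑_{c ∈ Col} sgn c · N(s ∘ c)`, where `N(t)`
counts the row permutations `r` with `t ∘ r = x_q`. Gluing bijections between fibres shows that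
`N(t)` is the order of the row stabiliser of `x_q` when `t` has as many ones as `x_q` in each row,
and `0` otherwise. Both this amplitude and the target state change sign when the two qubits of a
column are swapped, so both vanish when those qubits agree, and swapping columns reduces the claim
to states reading `|01⟩` on every column. For such a state only `c = 1` contributes: any other
column permutation moves a `0` into the second row, where `x_q` has none. -/

open Equiv Finset

section PermutationsOfLabelledSets

variable {α β γ : Type*} [Fintype α] [DecidableEq γ]

theorem exists_perm_comp_eq_of_card_fiber_eq {f g : α → γ}
    (h : ∀ c, Fintype.card {a // f a = c} = Fintype.card {a // g a = c}) :
    ∃ σ : Perm α, g ∘ σ = f :=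
  ⟨ofFiberEquiv fun c => Fintype.equivOfCardEq (h c), funext (ofFiberEquiv_map _)⟩

theorem card_fiber_comp_perm (f : α → γ) (σ : Perm α) (c : γ) :
    Fintype.card {a // f (σ a) = c} = Fintype.card {a // f a = c} :=
  Fintype.card_congr (σ.subtypeEquiv fun _ => Iff.rfl)

theorem apply_eq_of_card_fiber_prod_eq [DecidableEq β] {ℓ : α → γ} {t b : α → β}
    (h : ∀ p, Fintype.card {a // Function.prod ℓ t a = p} =
      Fintype.card {a // Function.prod ℓ b a = p})
    {k : γ} {x : β} (hb : ∀ a, ℓ a = k → b a = x) {a : α} (ha : ℓ a = k) : t a = x := by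
  by_contra hne
  have hempty : IsEmpty {a' // Function.prod ℓ b a' = (k, t a)} :=
    ⟨fun ⟨a', h'⟩ => by
      simp only [Function.prod_apply, Prod.mk.injEq] at h'
      exact hne (h'.2 ▸ hb a' h'.1)⟩
  rw [← Fintype.card_eq_zero_iff, ← h, Fintype.card_eq_zero_iff] at hempty
  exact hempty.false ⟨a, by simp [ha]⟩

theorem card_fiber_prod_eq_of_card_one_eq {ℓ : α → γ} {t u : α → Fin 2}
    (h : ∀ k, #{a | ℓ a = k ∧ t a = 1} = #{a | ℓ a = k ∧ u a = 1}) (p : γ × Fin 2) :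
    Fintype.card {a // Function.prod ℓ t a = p} =
      Fintype.card {a // Function.prod ℓ u a = p} := by
  have hsplit (v : α → Fin 2) (k : γ) :
      #{a | ℓ a = k ∧ v a = 0} + #{a | ℓ a = k ∧ v a = 1} = #{a | ℓ a = k} := by
    rw [add_comm, ← card_filter_add_card_filter_not (s := {a | ℓ a = k}) (fun a => v a = 1),
      filter_filter, filter_filter]
    congr 3
    ext a
    simp only [and_congr_right_iff]
    omega
  obtain ⟨k, x⟩ := p
  simp only [Fintype.card_subtype, Function.prod_apply, Prod.mk.injEq]
  fin_cases x
  · have := hsplit t k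
    have := hsplit u k
    have := h k
    simp only [Fin.zero_eta]
    omega
  · exact h k

variable [DecidableEq α]

def stabCard (f : α → γ) : ℕ := #{π : Perm α | f ∘ π = f}

theorem stabCard_pos (f : α → γ) : 0 < stabCard f :=
  card_pos.mpr ⟨1, by simp⟩

theorem card_perm_comp_eq_of_card_fiber_eq {f g : α → γ}
    (h : ∀ c, Fintype.card {a // f a = c} = Fintype.card {a // g a = c}) :
    #{π : Perm α | f ∘ π = g} = stabCard g := by
  obtain ⟨σ, rfl⟩ := exists_perm_comp_eq_of_card_fiber_eq h
  exact card_equiv (Equiv.mulLeft σ) fun π => by simp [Function.comp_assoc]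

theorem card_perm_comp_eq_eq_zero {f g : α → γ}
    (h : ¬ ∀ c, Fintype.card {a // f a = c} = Fintype.card {a // g a = c}) :
    #{π : Perm α | f ∘ π = g} = 0 := by
  rw [card_eq_zero, filter_eq_empty_iff]
  rintro π - rfl
  exact h fun c => (card_fiber_comp_perm f π c).symm

end PermutationsOfLabelledSets

section Symmetrizers

variable {n : ℕ}

theorem Rmat_mulVec_apply (π : Perm (Fin n)) (v : (Fin n → Fin 2) → ℂ) (s : Fin n → Fin 2) :
    (Rmat n π *ᵥ v) s = v (s ∘ π) := by
  simp [Rmat, mulVec, dotProduct]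

theorem rowSym_mulVec_basisVec_apply (lam1 : ℕ) (b t : Fin n → Fin 2) :
    (rowSym n lam1 *ᵥ basisVec n b) t =
      #{π : Perm (Fin n) | Function.prod (rowLabel n lam1) t ∘ π =
        Function.prod (rowLabel n lam1) b} := by
  simp only [rowSym, sum_mulVec, Finset.sum_apply, Rmat_mulVec_apply, basisVec]
  rw [sum_boole, filter_filter]
  congr 3
  ext π
  simp [funext_iff, Prod.ext_iff, forall_and]

theorem colSym_mulVec_apply (lam1 : ℕ) (w : (Fin n → Fin 2) → ℂ) (s : Fin n → Fin 2) :
    (colSym n lam1 *ᵥ w) s =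
      ∑ π : Perm (Fin n) with ∀ i, colLabel n lam1 (π i) = colLabel n lam1 i,
        (Perm.sign π : ℂ) * w (s ∘ π) := by
  simp [colSym, sum_mulVec, Finset.sum_apply, smul_mulVec, Rmat_mulVec_apply]

theorem colSym_mulVec_apply_comp (lam1 : ℕ) (w : (Fin n → Fin 2) → ℂ) (s : Fin n → Fin 2)
    {c : Perm (Fin n)} (hc : ∀ i, colLabel n lam1 (c i) = colLabel n lam1 i) :
    (colSym n lam1 *ᵥ w) (s ∘ c) = Perm.sign c * (colSym n lam1 *ᵥ w) s := by
  have hc_inv (i : Fin n) : colLabel n lam1 (c.symm i) = colLabel n lam1 i := by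
    simpa using (hc (c.symm i)).symm
  have hsign : (Perm.sign c : ℂ) * Perm.sign c = 1 := by
    rw [← Int.cast_mul, ← Units.val_mul, Int.units_mul_self, Units.val_one, Int.cast_one]
  rw [colSym_mulVec_apply, colSym_mulVec_apply, mul_sum]
  refine sum_nbij' (c * ·) (c⁻¹ * ·) ?_ ?_ ?_ ?_ ?_
  · simp +contextual [hc]
  · simp +contextual [hc_inv]
  · simp
  · simp
  · intro π _
    rw [Perm.sign_mul, Units.val_mul, Int.cast_mul, ← mul_assoc, ← mul_assoc, hsign, one_mul,
      Perm.coe_mul, Function.comp_assoc]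

end Symmetrizers

section ColumnPairs

variable {n lam1 : ℕ}

def pairFst (h2 : 2 * lam1 ≤ n) (j : Fin lam1) : Fin n := ⟨2 * j, by omega⟩

def pairSnd (h2 : 2 * lam1 ≤ n) (j : Fin lam1) : Fin n := ⟨2 * j + 1, by omega⟩

def colSwap (h2 : 2 * lam1 ≤ n) (j : Fin lam1) : Perm (Fin n) :=
  swap (pairFst h2 j) (pairSnd h2 j)

theorem colSwap_apply_of_div_ne (h2 : 2 * lam1 ≤ n) (j : Fin lam1) {i : Fin n}
    (hi : (i : ℕ) / 2 ≠ j) : colSwap h2 j i = i :=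
  swap_apply_of_ne_of_ne (by simp [pairFst, Fin.ext_iff]; omega)
    (by simp [pairSnd, Fin.ext_iff]; omega)

theorem colLabel_of_lt {i : Fin n} (hi : (i : ℕ) < 2 * lam1) : colLabel n lam1 i = i / 2 :=
  if_pos hi

theorem colLabel_colSwap_apply (h2 : 2 * lam1 ≤ n) (j : Fin lam1) (i : Fin n) :
    colLabel n lam1 (colSwap h2 j i) = colLabel n lam1 i := by
  have hpair : colLabel n lam1 (pairFst h2 j) = colLabel n lam1 (pairSnd h2 j) := by
    rw [colLabel_of_lt (i := pairFst h2 j) (by change 2 * (j : ℕ) < 2 * lam1; omega),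
      colLabel_of_lt (i := pairSnd h2 j) (by change 2 * (j : ℕ) + 1 < 2 * lam1; omega)]
    change 2 * (j : ℕ) / 2 = (2 * j + 1) / 2
    omega
  rw [colSwap, swap_apply_def]
  split_ifs <;> simp_all

theorem sign_colSwap (h2 : 2 * lam1 ≤ n) (j : Fin lam1) : Perm.sign (colSwap h2 j) = -1 :=
  Perm.sign_swap (by simp [pairFst, pairSnd, Fin.ext_iff])

theorem comp_colSwap_of_eq (h2 : 2 * lam1 ≤ n) {j : Fin lam1} {s : Fin n → Fin 2}
    (h : s (pairFst h2 j) = s (pairSnd h2 j)) : s ∘ colSwap h2 j = s := by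
  rw [colSwap, comp_swap_eq_update, h, Function.update_eq_self, ← h, Function.update_eq_self]

def IsPairAntisymm (h2 : 2 * lam1 ≤ n) (F : (Fin n → Fin 2) → ℂ) : Prop :=
  ∀ j s, F (s ∘ colSwap h2 j) = -F s

theorem IsPairAntisymm.const_smul {h2 : 2 * lam1 ≤ n} {F : (Fin n → Fin 2) → ℂ}
    (hF : IsPairAntisymm h2 F) (c : ℂ) : IsPairAntisymm h2 (c • F) := fun j s => by
  simp [hF j s]

theorem isPairAntisymm_colSym_mulVec (h2 : 2 * lam1 ≤ n) (w : (Fin n → Fin 2) → ℂ) :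
    IsPairAntisymm h2 (colSym n lam1 *ᵥ w) := fun j s => by
  rw [colSym_mulVec_apply_comp lam1 w s (colLabel_colSwap_apply h2 j), sign_colSwap]
  simp

def PairsZeroOne (n lam1 : ℕ) (t : Fin n → Fin 2) : Prop :=
  ∀ i : Fin n, (i : ℕ) < 2 * lam1 → (t i : ℕ) = i % 2

theorem pairsZeroOne_of_forall (h2 : 2 * lam1 ≤ n) {s : Fin n → Fin 2}
    (hfst : ∀ j, s (pairFst h2 j) ≠ 1) (hsnd : ∀ j, s (pairSnd h2 j) = 1) :
    PairsZeroOne n lam1 s := by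
  intro i hi
  rcases Nat.mod_two_eq_zero_or_one i with hpar | hpar
  · have := hfst ⟨i / 2, by omega⟩
    rw [show pairFst h2 ⟨i / 2, _⟩ = i from Fin.ext (by simp [pairFst]; omega)] at this
    omega
  · have := hsnd ⟨i / 2, by omega⟩
    rw [show pairSnd h2 ⟨i / 2, _⟩ = i from Fin.ext (by simp [pairSnd]; omega)] at this
    simp [this, hpar]

theorem IsPairAntisymm.apply_eq_zero {h2 : 2 * lam1 ≤ n} {F : (Fin n → Fin 2) → ℂ}
    (hF : IsPairAntisymm h2 F) {s : Fin n → Fin 2} {j : Fin lam1}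
    (hj : s (pairFst h2 j) = s (pairSnd h2 j)) : F s = 0 := by
  simpa [comp_colSwap_of_eq h2 hj, CharZero.eq_neg_self_iff] using hF j s

theorem filter_comp_colSwap_eq_erase (h2 : 2 * lam1 ≤ n) {s : Fin n → Fin 2} {j : Fin lam1}
    (hj : s (pairSnd h2 j) ≠ 1) :
    ({j' | (s ∘ colSwap h2 j) (pairFst h2 j') = 1} : Finset (Fin lam1)) =
      ({j' | s (pairFst h2 j') = 1} : Finset (Fin lam1)).erase j := by
  ext j'
  rcases eq_or_ne j' j with rfl | hne
  · rw [mem_erase, mem_filter, Function.comp_apply, colSwap, swap_apply_left]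
    simp [hj]
  · rw [mem_erase, mem_filter, mem_filter, Function.comp_apply,
      colSwap_apply_of_div_ne h2 j (by simp [pairFst, Fin.val_ne_iff.mpr hne])]
    simp [hne]

theorem IsPairAntisymm.eq_of_eqOn_pairsZeroOne {h2 : 2 * lam1 ≤ n}
    {F G : (Fin n → Fin 2) → ℂ} (hF : IsPairAntisymm h2 F) (hG : IsPairAntisymm h2 G)
    (h : ∀ s, PairsZeroOne n lam1 s → F s = G s) : F = G := by
  funext s
  generalize hm : #{j | s (pairFst h2 j) = 1} = m
  induction m generalizing s with
  | zero =>
    have hfst : ∀ j, s (pairFst h2 j) ≠ 1 := by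
      simpa [card_eq_zero, filter_eq_empty_iff] using hm
    by_cases hsnd : ∀ j, s (pairSnd h2 j) = 1
    · exact h s (pairsZeroOne_of_forall h2 hfst hsnd)
    · obtain ⟨j, hj⟩ := not_forall.mp hsnd
      have hpair : s (pairFst h2 j) = s (pairSnd h2 j) := Fin.ext (by have := hfst j; omega)
      rw [hF.apply_eq_zero hpair, hG.apply_eq_zero hpair]
  | succ m ih =>
    obtain ⟨j, hj⟩ := card_pos.mp (by omega : 0 < #{j | s (pairFst h2 j) = 1})
    simp only [mem_filter, mem_univ, true_and] at hj
    by_cases hj' : s (pairSnd h2 j) = 1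
    · rw [hF.apply_eq_zero (hj.trans hj'.symm), hG.apply_eq_zero (hj.trans hj'.symm)]
    have hflip : #{j' | (s ∘ colSwap h2 j) (pairFst h2 j') = 1} = m := by
      rw [filter_comp_colSwap_eq_erase h2 hj', card_erase_of_mem (by simpa using hj), hm,
        Nat.add_sub_cancel]
    rw [← neg_inj, ← hF j s, ← hG j s, ih _ hflip]

end ColumnPairs

section TwoRowTableau

variable {n lam1 : ℕ}

def tailOnes (n lam1 : ℕ) (t : Fin n → Fin 2) : ℕ :=
  #{i : Fin n | 2 * lam1 ≤ (i : ℕ) ∧ t i = 1}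

theorem targetState_eq (q : ℕ) (h2 : 2 * lam1 ≤ n) (s : Fin n → Fin 2) :
    targetState n lam1 q h2 s =
      ((Real.sqrt ((n - 2 * lam1).choose q) : ℝ) : ℂ)⁻¹ *
        (∏ j, sing (s (pairFst h2 j)) (s (pairSnd h2 j))) *
        if tailOnes n lam1 s = q then 1 else 0 :=
  rfl

theorem sing_swap (a b : Fin 2) : sing b a = -sing a b := by
  fin_cases a <;> fin_cases b <;> simp [sing]

theorem isPairAntisymm_targetState (q : ℕ) (h2 : 2 * lam1 ≤ n) :
    IsPairAntisymm h2 (targetState n lam1 q h2) := by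
  intro j s
  have htail : tailOnes n lam1 (s ∘ colSwap h2 j) = tailOnes n lam1 s := by
    unfold tailOnes
    congr 1
    refine filter_congr fun i _ => and_congr_right fun hi => ?_
    rw [Function.comp_apply, colSwap_apply_of_div_ne h2 j (by omega)]
  have hprod : ∏ j', sing ((s ∘ colSwap h2 j) (pairFst h2 j'))
        ((s ∘ colSwap h2 j) (pairSnd h2 j')) =
      -∏ j', sing (s (pairFst h2 j')) (s (pairSnd h2 j')) := by
    rw [← mul_prod_erase _ _ (mem_univ j), ← mul_prod_erase _ _ (mem_univ j), ← neg_mul]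
    congr 1
    · rw [Function.comp_apply, Function.comp_apply, colSwap, swap_apply_left, swap_apply_right,
        sing_swap]
    · refine prod_congr rfl fun j' hj' => ?_
      have hne : (j' : ℕ) ≠ j := Fin.val_ne_iff.mpr (ne_of_mem_erase hj')
      rw [Function.comp_apply, Function.comp_apply,
        colSwap_apply_of_div_ne h2 j (by simp [pairFst]; omega),
        colSwap_apply_of_div_ne h2 j (by simp [pairSnd]; omega)]
  rw [targetState_eq, targetState_eq, htail, hprod]
  ring

theorem pairsZeroOne_xqBits (q : ℕ) : PairsZeroOne n lam1 (xqBits n lam1 q) := by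
  intro i hi
  simp only [xqBits, if_pos hi]
  split_ifs <;> simp <;> omega

theorem tailOnes_xqBits {q : ℕ} (hq : q ≤ n - 2 * lam1) :
    tailOnes n lam1 (xqBits n lam1 q) = q := by
  have htail : ({i | 2 * lam1 ≤ (i : ℕ) ∧ xqBits n lam1 q i = 1} : Finset (Fin n)) =
      ({i | n - q ≤ (i : ℕ)} : Finset (Fin n)) := by
    refine filter_congr fun i _ => ?_
    by_cases hi : 2 * lam1 ≤ (i : ℕ)
    · rw [xqBits, if_neg (by omega)]
      split_ifs <;> simp [hi] <;> omega
    · simp only [hi, false_and, false_iff]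
      omega
  have hmap : ({i | n - q ≤ (i : ℕ)} : Finset (Fin n)).map Fin.valEmbedding = Ico (n - q) n := by
    ext k
    simp only [mem_map, mem_filter, mem_univ, true_and, Fin.valEmbedding_apply, mem_Ico]
    exact ⟨fun ⟨i, hi, hik⟩ => hik ▸ ⟨hi, i.isLt⟩, fun hk => ⟨⟨k, hk.2⟩, hk.1, rfl⟩⟩
  rw [tailOnes, htail, ← card_map Fin.valEmbedding, hmap, Nat.card_Ico]
  omega

theorem PairsZeroOne.apply_of_rowLabel_eq_one {t : Fin n → Fin 2} (ht : PairsZeroOne n lam1 t)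
    {i : Fin n} (hi : rowLabel n lam1 i = 1) : t i = 1 := by
  unfold rowLabel at hi
  split_ifs at hi with hlt
  exact Fin.ext ((ht i hlt).trans hi)

theorem PairsZeroOne.card_rowLabel_eq_zero {t : Fin n → Fin 2} (ht : PairsZeroOne n lam1 t) :
    #{i | rowLabel n lam1 i = 0 ∧ t i = 1} = tailOnes n lam1 t := by
  unfold tailOnes
  congr 1
  refine filter_congr fun i _ => ?_
  unfold rowLabel
  split_ifs with hlt
  · have := ht i hlt
    constructor <;> intro h <;> omega
  · exact ⟨fun h => ⟨by omega, h.2⟩, fun h => ⟨rfl, h.2⟩⟩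

theorem PairsZeroOne.card_fiber_eq_iff {s t : Fin n → Fin 2} (hs : PairsZeroOne n lam1 s)
    (ht : PairsZeroOne n lam1 t) :
    (∀ p, Fintype.card {i // Function.prod (rowLabel n lam1) s i = p} =
      Fintype.card {i // Function.prod (rowLabel n lam1) t i = p}) ↔
      tailOnes n lam1 s = tailOnes n lam1 t := by
  constructor
  · intro h
    have h01 := h (0, 1)
    simp only [Fintype.card_subtype, Function.prod_apply, Prod.mk.injEq] at h01
    rwa [hs.card_rowLabel_eq_zero, ht.card_rowLabel_eq_zero] at h01
  · intro h
    refine card_fiber_prod_eq_of_card_one_eq fun k => ?_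
    rcases eq_or_ne k 0 with rfl | hk
    · rw [hs.card_rowLabel_eq_zero, ht.card_rowLabel_eq_zero, h]
    · congr 1
      refine filter_congr fun i _ => and_congr_right fun hi => ?_
      have hlt : (i : ℕ) < 2 * lam1 := by
        unfold rowLabel at hi
        split_ifs at hi with hlt
        · exact hlt
        · exact absurd hi.symm hk
      rw [Fin.ext ((hs i hlt).trans (ht i hlt).symm)]

theorem PairsZeroOne.eq_one_of_colLabel {s : Fin n → Fin 2} (hs : PairsZeroOne n lam1 s)
    {c : Perm (Fin n)} (hc : ∀ i, colLabel n lam1 (c i) = colLabel n lam1 i)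
    (h : ∀ i, rowLabel n lam1 i = 1 → s (c i) = 1) : c = 1 := by
  have hpair (i : Fin n) :
      c i = i ∨ ((i : ℕ) < 2 * lam1 ∧ (c i : ℕ) < 2 * lam1 ∧ (c i : ℕ) / 2 = i / 2) := by
    have := hc i
    unfold colLabel at this
    split_ifs at this <;> first | (right; omega) | (left; exact Fin.ext (by omega))
  have hodd (i : Fin n) (hi : (i : ℕ) < 2 * lam1) (hodd : (i : ℕ) % 2 = 1) : c i = i := by
    rcases hpair i with hfix | ⟨-, hci, hdiv⟩
    · exact hfix
    · have h1 := h i (by simp [rowLabel, hi, hodd])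
      have h2 := hs (c i) hci
      exact Fin.ext (by omega)
  refine Equiv.ext fun i => ?_
  rw [Perm.one_apply]
  rcases hpair i with hfix | ⟨hi, hci, hdiv⟩
  · exact hfix
  by_contra hne
  have hne' := Fin.val_ne_iff.mpr hne
  rcases Nat.mod_two_eq_zero_or_one i with heven | hodd'
  · exact hne (c.injective (hodd (c i) hci (by omega)))
  · exact hne (hodd i hi hodd')

theorem colSym_rowSym_apply_of_pairsZeroOne {q : ℕ} (hq : q ≤ n - 2 * lam1)
    {s : Fin n → Fin 2} (hs : PairsZeroOne n lam1 s) :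
    (colSym n lam1 *ᵥ (rowSym n lam1 *ᵥ basisVec n (xqBits n lam1 q))) s =
      stabCard (Function.prod (rowLabel n lam1) (xqBits n lam1 q)) *
        if tailOnes n lam1 s = q then 1 else 0 := by
  have hb := pairsZeroOne_xqBits (n := n) (lam1 := lam1) q
  rw [colSym_mulVec_apply, sum_eq_single 1]
  · rw [Perm.sign_one, Perm.coe_one, Function.comp_id, rowSym_mulVec_basisVec_apply]
    by_cases htail : tailOnes n lam1 s = q
    · rw [card_perm_comp_eq_of_card_fiber_eq
        ((hs.card_fiber_eq_iff hb).mpr (htail.trans (tailOnes_xqBits hq).symm))]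
      simp [htail]
    · rw [card_perm_comp_eq_eq_zero
        (mt (hs.card_fiber_eq_iff hb).mp (by rwa [tailOnes_xqBits hq]))]
      simp [htail]
  · intro c hc hc1
    rw [rowSym_mulVec_basisVec_apply, card_perm_comp_eq_eq_zero, Nat.cast_zero, mul_zero]
    intro hfib
    exact hc1 (hs.eq_one_of_colLabel (mem_filter.mp hc).2 fun i hi =>
      apply_eq_of_card_fiber_prod_eq hfib (fun a ha => hb.apply_of_rowLabel_eq_one ha) hi)
  · simp

theorem targetState_of_pairsZeroOne (q : ℕ) (h2 : 2 * lam1 ≤ n) {s : Fin n → Fin 2}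
    (hs : PairsZeroOne n lam1 s) :
    targetState n lam1 q h2 s =
      (((Real.sqrt 2 : ℝ) : ℂ) ^ lam1 * ((Real.sqrt ((n - 2 * lam1).choose q) : ℝ) : ℂ))⁻¹ *
        if tailOnes n lam1 s = q then 1 else 0 := by
  have hsing (j : Fin lam1) :
      sing (s (pairFst h2 j)) (s (pairSnd h2 j)) = ((Real.sqrt 2 : ℝ) : ℂ)⁻¹ := by
    have h0 : s (pairFst h2 j) = 0 :=
      Fin.ext ((hs _ (show 2 * (j : ℕ) < 2 * lam1 by omega)).trans
        (show 2 * (j : ℕ) % 2 = 0 by omega))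
    have h1 : s (pairSnd h2 j) = 1 :=
      Fin.ext ((hs _ (show 2 * (j : ℕ) + 1 < 2 * lam1 by omega)).trans
        (show (2 * (j : ℕ) + 1) % 2 = 1 by omega))
    simp [sing, h0, h1]
  rw [targetState_eq, prod_congr rfl fun j _ => hsing j, prod_const, card_univ, Fintype.card_fin,
    mul_inv, inv_pow]
  ring

end TwoRowTableau

/-- Applying the Young symmetrizer of the column-standard two-row tableau of
shape `λ = (λ₀, λ₁)` to `|x_q⟩ = |01⟩^⊗λ₁ ⊗ |0⟩^⊗(n-2λ₁-q) ⊗ |1⟩^⊗q` yields, up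
to normalization, the state `|Ψ⟩^⊗λ₁ ⊗ |Σ_{n-2λ₁}^q⟩ / √C(n-2λ₁, q)`. -/
theorem young_symmetrizer_image (n lam0 lam1 q : ℕ) (h1 : lam1 ≤ lam0)
    (hn : lam0 + lam1 = n) (hq : q ≤ n - 2 * lam1) :
    ∃ c : ℂ, c ≠ 0 ∧
      (colSym n lam1 * rowSym n lam1).mulVec (basisVec n (xqBits n lam1 q)) =
        c • targetState n lam1 q (by omega) := by
  have h2 : 2 * lam1 ≤ n := by omega
  set r : ℂ := ((Real.sqrt 2 : ℝ) : ℂ) ^ lam1 * ((Real.sqrt ((n - 2 * lam1).choose q) : ℝ) : ℂ)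
  have hr : r ≠ 0 := mul_ne_zero (pow_ne_zero _ (by simp))
    (Complex.ofReal_ne_zero.mpr (Real.sqrt_ne_zero'.mpr (Nat.cast_pos.mpr (Nat.choose_pos hq))))
  set K := stabCard (Function.prod (rowLabel n lam1) (xqBits n lam1 q))
  refine ⟨K * r, mul_ne_zero (Nat.cast_ne_zero.mpr (stabCard_pos _).ne') hr, ?_⟩
  rw [← mulVec_mulVec]
  refine (isPairAntisymm_colSym_mulVec h2 _).eq_of_eqOn_pairsZeroOne
    ((isPairAntisymm_targetState q h2).const_smul _) fun s hs => ?_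
  rw [colSym_rowSym_apply_of_pairsZeroOne hq hs, Pi.smul_apply, smul_eq_mul,
    targetState_of_pairsZeroOne q h2 hs, ← mul_assoc, mul_assoc (K : ℂ), mul_inv_cancel₀ hr,
    mul_one]
end
end
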